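/- Let n ≥ 1 and 0 ≤ d ≤ n satisfy 2^{n−d} ≥ 18·ln(200·3^n). Draw S uniformly at random among all subsets of {±1}^n of size 2^{n−1}, and let D_S be the uniform distribution on S. Then the probability, over the choice of S, that there exist a distribution D' on {±1}^n and a decision tree T of depth at most d such that the probability mass function of D' is constant on each leaf of T and d_TV(D_S, D') ≤ 1/3, is at most 1/100. -/

import Mathlib

open scoped Classical

/-- Points of the cube `{±1}^n`, encoded as `Fin n → Bool`. -/
abbrev Cube (n : ℕ) := Fin n → Bool

/-- Restrictions `ρ ∈ {±1,⋆}^n`, with `none` playing the role of `⋆`. -/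
abbrev Rst (n : ℕ) := Fin n → Option Bool

/-- Labeled examples. -/
abbrev Lab (n : ℕ) := Cube n × Bool

/-- `x` is consistent with the restriction `ρ`. -/
def Consistent {n : ℕ} (x : Cube n) (ρ : Rst n) : Prop :=
  ∀ i : Fin n, ∀ b : Bool, ρ i = some b → x i = b

/-- The depth (number of non-⋆ coordinates) of a restriction. -/
def rdepth {n : ℕ} (ρ : Rst n) : ℕ :=
  (Finset.univ.filter (fun i => ρ i ≠ none)).card

/-- `IsDT n d T` : `T` is the set of leaf restrictions of a depth-`d` decision tree over `{±1}^n`. -/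
inductive IsDT (n : ℕ) : ℕ → Finset (Rst n) → Prop
  | leaf : IsDT n 0 {fun _ => none}
  | node {d : ℕ} (i : Fin n) {T₀ T₁ : Finset (Rst n)} :
      IsDT n d T₀ → IsDT n d T₁ →
      (∀ ℓ ∈ T₀, ℓ i = none) → (∀ ℓ ∈ T₁, ℓ i = none) →
      IsDT n (d + 1)
        (T₀.image (fun ℓ => Function.update ℓ i (some false)) ∪
         T₁.image (fun ℓ => Function.update ℓ i (some true)))

/-- Empirical error of a hypothesis on a labeled multiset. -/
noncomputable def errS {n : ℕ} (h : Cube n → Bool) (S : Multiset (Lab n)) : ℝ :=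
  ((S.filter (fun p => h p.1 ≠ p.2)).card : ℝ) / (S.card : ℝ)

/-- Empirical error of a partial (`Option Bool`-valued) hypothesis on a labeled multiset;
`⊥ = none` always counts as a misclassification. -/
noncomputable def errSo {n : ℕ} (h : Cube n → Option Bool) (S : Multiset (Lab n)) : ℝ :=
  ((S.filter (fun p => h p.1 ≠ some p.2)).card : ℝ) / (S.card : ℝ)

/-- True error of a hypothesis with respect to a distribution on labeled examples. -/
noncomputable def errD {n : ℕ} (h : Cube n → Bool) (D : Lab n → ℝ) : ℝ :=
  ∑ p : Lab n, if h p.1 ≠ p.2 then D p else 0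

/-- True error of a partial hypothesis with respect to a distribution on labeled examples. -/
noncomputable def errDo {n : ℕ} (h : Cube n → Option Bool) (D : Lab n → ℝ) : ℝ :=
  ∑ p : Lab n, if h p.1 ≠ some p.2 then D p else 0

/-- The multiset of samples of a tuple. -/
def toMS {α : Type*} {m : ℕ} (y : Fin m → α) : Multiset α := ↑(List.ofFn y)

/-- `T ∘ H` : the decision-tree-composed hypothesis. -/
noncomputable def treeHyp {n : ℕ} (T : Finset (Rst n)) (H : Rst n → Cube n → Bool)
    (x : Cube n) : Bool :=
  if h : ∃ ℓ, ℓ ∈ T ∧ Consistent x ℓ then H h.choose x else false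

/-- `P ∘ H` : the subcube-partition-composed hypothesis (`none` = ⊥ off the partition). -/
noncomputable def partHyp {n s : ℕ} (ρ : Fin s → Rst n) (H : Rst n → Cube n → Bool)
    (x : Cube n) : Option Bool :=
  if h : ∃ i, Consistent x (ρ i) then some (H (ρ h.choose) x) else none

/-- `L ∘ H` : the subcube-list-composed hypothesis (first consistent subcube wins). -/
noncomputable def listHyp {n : ℕ} (H : Rst n → Cube n → Bool) :
    List (Rst n) → Cube n → Option Bool
  | [], _ => none
  | π :: L, x => if Consistent x π then some (H π x) else listHyp H L x

/-- Mass of a distribution on the subcube of a restriction. -/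
noncomputable def rmass {n : ℕ} (D : Cube n → ℝ) (ρ : Rst n) : ℝ :=
  ∑ x ∈ Finset.univ.filter (fun x => Consistent x ρ), D x

/-- `D` conditioned on the subcube of the restriction `ρ`. -/
noncomputable def condD {n : ℕ} (D : Cube n → ℝ) (ρ : Rst n) : Cube n → ℝ :=
  fun x => if Consistent x ρ then D x / rmass D ρ else 0

/-- The labeled distribution `D_f` of `(x, f(x))`, `x ~ D`. -/
def labD {n : ℕ} (D : Cube n → ℝ) (f : Cube n → Bool) : Lab n → ℝ :=
  fun p => if p.2 = f p.1 then D p.1 else 0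

/-!
For a subcube `C`, the size of `S ∩ C` for a uniformly random half subset `S` of the cube is
dominated by a sum of independent fair coins: every `A ⊆ C` lies in `S` with probability at most
`2^{-|A|}`, so `E[2^{|S ∩ C|}] ≤ (3/2)^{|C|}`, and Markov's inequality gives
`P(|S ∩ C| ≥ 2|C|/3) ≤ e^{-|C|/18}`; by complementation the same holds for `C \ S`. A union bound
over the at most `3^n` restrictions of depth `≤ d` shows that with probability `≥ 99/100` both `S`
and its complement hold more than a third of every subcube of depth `≤ d`. Then on each leaf of a
depth-`≤ d` tree, of size `m`, any constant value of `D'` is at distance at least `1/|S|` from one of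
the two values of `D_S` on more than `m/3` points, so `‖D_S - D'‖₁ > 2^n/(3|S|) = 2/3`.
-/

open Finset

lemma two_mul_choose_le_choose_succ {N K : ℕ} (h : 2 * (K + 1) ≤ N + 1) :
    2 * N.choose K ≤ (N + 1).choose (K + 1) := by
  have hsucc := Nat.add_one_mul_choose_eq N K
  refine Nat.le_of_mul_le_mul_right (c := K + 1) ?_ K.succ_pos
  nlinarith [Nat.mul_le_mul_right (N.choose K) h]

lemma two_pow_mul_choose_sub_le {N K i : ℕ} (h : 2 * K ≤ N) (hi : i ≤ K) :
    2 ^ i * (N - i).choose (K - i) ≤ N.choose K := by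
  induction i generalizing N K with
  | zero => simp
  | succ i ih =>
    obtain ⟨K, rfl⟩ : ∃ K', K = K' + 1 := ⟨K - 1, by omega⟩
    obtain ⟨N, rfl⟩ : ∃ N', N = N' + 1 := ⟨N - 1, by omega⟩
    calc 2 ^ (i + 1) * (N + 1 - (i + 1)).choose (K + 1 - (i + 1))
        = 2 * (2 ^ i * (N - i).choose (K - i)) := by simp only [Nat.add_sub_add_right]; ring
      _ ≤ 2 * N.choose K := Nat.mul_le_mul_left 2 (ih (by omega) (by omega))
      _ ≤ (N + 1).choose (K + 1) := two_mul_choose_le_choose_succ h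

lemma three_halves_le_two_rpow_mul_exp : (3 / 2 : ℝ) ≤ 2 ^ (2 / 3 : ℝ) * Real.exp (-1 / 18) := by
  rw [← div_le_iff₀ (Real.exp_pos _), div_eq_mul_inv, ← Real.exp_neg]
  refine (pow_le_pow_iff_left₀ (by positivity) (by positivity) (by norm_num : (18 : ℕ) ≠ 0)).mp ?_
  have h2 : ((2 : ℝ) ^ (2 / 3 : ℝ)) ^ 18 = 4096 := by
    rw [← Real.rpow_mul_natCast (by norm_num)]
    norm_num
  rw [h2, mul_pow, ← Real.exp_nat_mul]
  norm_num
  nlinarith [Real.exp_one_lt_d9]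

section HalfSubsets

variable {α : Type*} [Fintype α] [DecidableEq α]

lemma card_superset_mul_two_pow_le (A : Finset α) {K : ℕ} (h : 2 * K ≤ Fintype.card α) :
    #{S ∈ univ.powersetCard K | A ⊆ S} * 2 ^ #A ≤ (Fintype.card α).choose K := by
  rcases le_or_gt #A K with hAK | hKA
  · rw [card_filter_powersetCard_subset A univ K (subset_univ A) hAK, card_univ, mul_comm]
    exact two_pow_mul_choose_sub_le h hAK
  · have hempty : {S ∈ (univ : Finset α).powersetCard K | A ⊆ S} = ∅ :=
      filter_eq_empty_iff.mpr fun S hS hAS =>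
        (card_le_card hAS).not_gt ((mem_powersetCard.mp hS).2 ▸ hKA)
    simp [hempty]

lemma sum_two_pow_card_inter_le (C : Finset α) {K : ℕ} (h : 2 * K ≤ Fintype.card α) :
    ∑ S ∈ univ.powersetCard K, (2 : ℝ) ^ #(S ∩ C)
      ≤ (3 / 2) ^ #C * (Fintype.card α).choose K := by
  have hpow (S : Finset α) :
      (2 : ℝ) ^ #(S ∩ C) = ∑ A ∈ C.powerset, if A ⊆ S then 1 else 0 := by
    rw [sum_boole]
    norm_cast
    rw [← card_powerset]
    congr 1
    ext A
    simp only [mem_powerset, mem_filter, subset_inter_iff]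
    tauto
  have hsuperset (A : Finset α) :
      (#{S ∈ univ.powersetCard K | A ⊆ S} : ℝ) ≤ (Fintype.card α).choose K * (1 / 2) ^ #A := by
    rw [one_div_pow, mul_one_div, le_div_iff₀ (by positivity)]
    exact_mod_cast card_superset_mul_two_pow_le A h
  calc ∑ S ∈ univ.powersetCard K, (2 : ℝ) ^ #(S ∩ C)
      = ∑ A ∈ C.powerset, (#{S ∈ univ.powersetCard K | A ⊆ S} : ℝ) := by
        simp only [hpow]
        rw [sum_comm]
        simp only [sum_boole]
    _ ≤ ∑ A ∈ C.powerset, (Fintype.card α).choose K * (1 / 2 : ℝ) ^ #A :=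
        sum_le_sum fun A _ => hsuperset A
    _ = (3 / 2) ^ #C * (Fintype.card α).choose K := by
        rw [← mul_sum, mul_comm]
        congr 1
        have := sum_pow_mul_eq_add_pow (1 / 2 : ℝ) 1 C
        simp only [one_pow, mul_one] at this
        rw [this]
        norm_num

lemma card_upper_tail_le (C : Finset α) {K : ℕ} (h : 2 * K ≤ Fintype.card α) :
    (#{S ∈ univ.powersetCard K | 2 * #C ≤ 3 * #(S ∩ C)} : ℝ)
      ≤ Real.exp (-#C / 18) * (Fintype.card α).choose K := by
  set x : ℝ := 2 ^ (2 / 3 : ℝ)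
  have hx : 0 < x := by positivity
  have hx3 : x ^ 3 = 4 := by
    rw [← Real.rpow_mul_natCast (by norm_num)]
    norm_num
  -- Markov's inequality for `2 ^ #(S ∩ C)`, with threshold `x ^ #C = 2 ^ (2 #C / 3)`.
  have hthreshold {S : Finset α} (hS : 2 * #C ≤ 3 * #(S ∩ C)) : x ^ #C ≤ 2 ^ #(S ∩ C) := by
    refine (pow_le_pow_iff_left₀ (by positivity) (by positivity) (by norm_num : 3 ≠ 0)).mp ?_
    rw [← pow_mul, mul_comm, pow_mul, hx3, ← pow_mul, show (4 : ℝ) = 2 ^ 2 by norm_num, ← pow_mul]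
    exact pow_le_pow_right₀ (by norm_num) (by omega)
  have hmarkov : (#{S ∈ univ.powersetCard K | 2 * #C ≤ 3 * #(S ∩ C)} : ℝ) * x ^ #C
      ≤ (3 / 2) ^ #C * (Fintype.card α).choose K := by
    rw [← nsmul_eq_mul, ← sum_const]
    calc _ ≤ ∑ S ∈ univ.powersetCard K with 2 * #C ≤ 3 * #(S ∩ C), (2 : ℝ) ^ #(S ∩ C) :=
          sum_le_sum fun S hS => hthreshold (mem_filter.mp hS).2
      _ ≤ ∑ S ∈ univ.powersetCard K, (2 : ℝ) ^ #(S ∩ C) :=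
          sum_le_sum_of_subset_of_nonneg (filter_subset _ _) fun _ _ _ => by positivity
      _ ≤ _ := sum_two_pow_card_inter_le C h
  have hbase : (3 / 2 : ℝ) ^ #C ≤ x ^ #C * Real.exp (-#C / 18) := by
    calc (3 / 2 : ℝ) ^ #C ≤ (x * Real.exp (-1 / 18)) ^ #C :=
          pow_le_pow_left₀ (by norm_num) three_halves_le_two_rpow_mul_exp _
      _ = x ^ #C * Real.exp (-#C / 18) := by
          rw [mul_pow, ← Real.exp_nat_mul]
          congr 2
          ring
  refine le_of_mul_le_mul_right ?_ (pow_pos hx #C)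
  calc _ ≤ (3 / 2) ^ #C * ((Fintype.card α).choose K : ℝ) := hmarkov
    _ ≤ x ^ #C * Real.exp (-#C / 18) * (Fintype.card α).choose K := by gcongr
    _ = _ := by ring

def IsBalancedOn (S C : Finset α) : Prop :=
  3 * #(S ∩ C) < 2 * #C ∧ 3 * #(C \ S) < 2 * #C

lemma card_not_isBalancedOn_le (C : Finset α) {K : ℕ} (h : Fintype.card α = 2 * K) :
    (#{S ∈ univ.powersetCard K | ¬IsBalancedOn S C} : ℝ)
      ≤ 2 * Real.exp (-#C / 18) * (Fintype.card α).choose K := by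
  set 𝒮 := (univ : Finset α).powersetCard K
  have hsplit : {S ∈ 𝒮 | ¬IsBalancedOn S C}
      ⊆ {S ∈ 𝒮 | 2 * #C ≤ 3 * #(S ∩ C)} ∪ {S ∈ 𝒮 | 2 * #C ≤ 3 * #(C \ S)} := by
    intro S
    simp only [IsBalancedOn, mem_filter, mem_union, not_and_or, not_lt]
    tauto
  -- Complementation maps `𝒮` to itself and exchanges the two tails.
  have hcompl : #{S ∈ 𝒮 | 2 * #C ≤ 3 * #(C \ S)} = #{S ∈ 𝒮 | 2 * #C ≤ 3 * #(S ∩ C)} := by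
    have hmem {S : Finset α} : S ∈ 𝒮 ↔ Sᶜ ∈ 𝒮 := by
      simp only [𝒮, mem_powersetCard, subset_univ, true_and, card_compl, h]
      have := h ▸ card_le_univ S
      omega
    have hinter (S : Finset α) : Sᶜ ∩ C = C \ S := by ext; simp [and_comm]
    have hsdiff (S : Finset α) : C \ Sᶜ = S ∩ C := by ext; simp [and_comm]
    refine card_nbij' compl compl ?_ ?_ (fun S _ => compl_compl S) (fun S _ => compl_compl S)
    all_goals
      intro S
      simp only [coe_filter, Set.mem_ofPred_eq, ← hmem, hinter, hsdiff]
      exact id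
  have hcard := card_le_card hsplit
  calc _ ≤ (#{S ∈ 𝒮 | 2 * #C ≤ 3 * #(S ∩ C)} : ℝ) + #{S ∈ 𝒮 | 2 * #C ≤ 3 * #(C \ S)} := by
        exact_mod_cast hcard.trans (card_union_le _ _)
    _ ≤ _ := by rw [hcompl]; linarith [card_upper_tail_le C h.ge]

end HalfSubsets

noncomputable def subcube {n : ℕ} (ρ : Rst n) : Finset (Cube n) := {x | Consistent x ρ}

lemma card_subcube {n : ℕ} (ρ : Rst n) : #(subcube ρ) = 2 ^ (n - rdepth ρ) := by
  have hpi : subcube ρ = Fintype.piFinset fun i => (ρ i).elim univ singleton := by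
    ext x
    rw [subcube, mem_filter_univ, Fintype.mem_piFinset]
    refine forall_congr' fun i => ?_
    cases ρ i <;> simp
  have hfree : #{i | ρ i = none} = n - rdepth ρ := by
    have := card_filter_add_card_filter_not (s := (univ : Finset (Fin n))) (fun i => ρ i = none)
    simp only [card_univ, Fintype.card_fin] at this
    simp only [rdepth, ne_eq]
    omega
  rw [hpi, Fintype.card_piFinset, ← hfree, card_filter, ← prod_pow_eq_pow_sum]
  refine prod_congr rfl fun i _ => ?_
  cases ρ i <;> simp

lemma consistent_update_iff {n : ℕ} {x : Cube n} {ℓ : Rst n} {i : Fin n} (hi : ℓ i = none)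
    (b : Bool) : Consistent x (Function.update ℓ i (some b)) ↔ x i = b ∧ Consistent x ℓ := by
  simp only [Consistent]
  constructor
  · intro h
    refine ⟨h i b (by simp), fun j c hj => h j c ?_⟩
    rwa [Function.update_of_ne (by rintro rfl; simp_all)]
  · rintro ⟨hxi, h⟩ j c hj
    by_cases hji : j = i
    · subst hji
      simp_all
    · exact h j c (by rwa [Function.update_of_ne hji] at hj)

lemma IsDT.sum_sum_subcube {n d : ℕ} {T : Finset (Rst n)} (hT : IsDT n d T)
    {M : Type*} [AddCommMonoid M] (F : Cube n → M) :
    ∑ ℓ ∈ T, ∑ x ∈ subcube ℓ, F x = ∑ x, F x := by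
  induction hT generalizing F with
  | leaf => simp [subcube, Consistent]
  | @node _ i T₀ T₁ _ _ hfree₀ hfree₁ ih₀ ih₁ =>
    have hleaf (b : Bool) (T' : Finset (Rst n)) (hfree : ∀ ℓ ∈ T', ℓ i = none) :
        ∑ ℓ ∈ T'.image (Function.update · i (some b)), ∑ x ∈ subcube ℓ, F x
          = ∑ ℓ ∈ T', ∑ x ∈ subcube ℓ, if x i = b then F x else 0 := by
      rw [sum_image fun ℓ hℓ ℓ' hℓ' h => funext fun j => ?_]
      · refine sum_congr rfl fun ℓ hℓ => ?_
        rw [← sum_filter]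
        congr 1
        ext x
        simp [subcube, consistent_update_iff (hfree ℓ hℓ), and_comm]
      · by_cases hj : j = i
        · rw [hj, hfree ℓ hℓ, hfree ℓ' hℓ']
        · simpa [hj] using congrFun h j
    have hdisj : Disjoint (T₀.image (Function.update · i (some false)))
        (T₁.image (Function.update · i (some true))) := by
      simp only [disjoint_left, mem_image]
      rintro _ ⟨ℓ, -, rfl⟩ ⟨ℓ', -, h⟩
      simpa using congrFun h i
    rw [sum_union hdisj, hleaf false T₀ hfree₀, hleaf true T₁ hfree₁, ih₀, ih₁, ← sum_add_distrib]
    refine sum_congr rfl fun x _ => ?_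
    cases x i <;> simp

lemma rdepth_update_le {n : ℕ} (ℓ : Rst n) (i : Fin n) (v : Option Bool) :
    rdepth (Function.update ℓ i v) ≤ rdepth ℓ + 1 := by
  unfold rdepth
  refine (card_le_card fun j => ?_).trans (card_insert_le i _)
  by_cases hji : j = i <;> simp_all

lemma IsDT.rdepth_le {n d : ℕ} {T : Finset (Rst n)} (hT : IsDT n d T) :
    ∀ ℓ ∈ T, rdepth ℓ ≤ d := by
  induction hT with
  | leaf => simp [rdepth]
  | node i _ _ _ _ ih₀ ih₁ =>
    simp only [mem_union, mem_image]
    rintro _ (⟨ℓ, hℓ, rfl⟩ | ⟨ℓ, hℓ, rfl⟩)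
    · exact (rdepth_update_le ℓ i _).trans (by simpa using ih₀ ℓ hℓ)
    · exact (rdepth_update_le ℓ i _).trans (by simpa using ih₁ ℓ hℓ)

lemma IsBalancedOn.card_mul_lt_three_mul_sum_abs_sub {α : Type*} [DecidableEq α]
    {S B : Finset α} (hB : IsBalancedOn S B) {D : α → ℝ} (hD : ∀ x ∈ B, ∀ y ∈ B, D x = D y)
    {u : ℝ} (hu : 0 < u) :
    #B * u < 3 * ∑ x ∈ B, |(if x ∈ S then u else 0) - D x| := by
  obtain ⟨hin, hout⟩ := hB
  obtain ⟨x₀, hx₀⟩ : B.Nonempty := card_pos.mp (by omega)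
  have hin_sum : ∑ x ∈ B ∩ S, |(if x ∈ S then u else 0) - D x| = #(B ∩ S) * |u - D x₀| := by
    rw [← nsmul_eq_mul, ← sum_const]
    refine sum_congr rfl fun x hx => ?_
    rw [if_pos (mem_inter.mp hx).2, hD x (mem_inter.mp hx).1 x₀ hx₀]
  have hout_sum : ∑ x ∈ B \ S, |(if x ∈ S then u else 0) - D x| = #(B \ S) * |D x₀| := by
    rw [← nsmul_eq_mul, ← sum_const]
    refine sum_congr rfl fun x hx => ?_
    rw [if_neg (mem_sdiff.mp hx).2, hD x (mem_sdiff.mp hx).1 x₀ hx₀, zero_sub, abs_neg]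
  have hsplit := card_inter_add_card_sdiff B S
  rw [inter_comm] at hin
  have hin' : (#B + 1 : ℝ) ≤ 3 * #(B ∩ S) := by exact_mod_cast (by omega : #B + 1 ≤ 3 * #(B ∩ S))
  have hout' : (#B + 1 : ℝ) ≤ 3 * #(B \ S) := by exact_mod_cast (by omega : #B + 1 ≤ 3 * #(B \ S))
  have htriangle : u ≤ |u - D x₀| + |D x₀| := by
    simpa [abs_of_pos hu] using abs_sub_abs_le_abs_sub u (D x₀)
  rw [← sum_inter_add_sum_sdiff B S, hin_sum, hout_sum]
  nlinarith [abs_nonneg (u - D x₀), abs_nonneg (D x₀)]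

lemma IsDT.two_pow_mul_lt_three_mul_sum_abs_sub {n d : ℕ} {T : Finset (Rst n)} (hT : IsDT n d T)
    {S : Finset (Cube n)} (hS : ∀ ℓ ∈ T, IsBalancedOn S (subcube ℓ)) {D : Cube n → ℝ}
    (hD : ∀ ℓ ∈ T, ∀ x x' : Cube n, Consistent x ℓ → Consistent x' ℓ → D x = D x')
    {u : ℝ} (hu : 0 < u) :
    2 ^ n * u < 3 * ∑ x, |(if x ∈ S then u else 0) - D x| := by
  have hcard : ∑ ℓ ∈ T, (#(subcube ℓ) : ℝ) * u = 2 ^ n * u := by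
    simpa [← sum_mul] using congrArg (· * u) (hT.sum_sum_subcube fun _ => (1 : ℝ))
  have hne : T.Nonempty := nonempty_of_sum_ne_zero (hcard.trans_ne (by positivity))
  rw [← hcard, ← hT.sum_sum_subcube, mul_sum]
  refine sum_lt_sum_of_nonempty hne fun ℓ hℓ => (hS ℓ hℓ).card_mul_lt_three_mul_sum_abs_sub ?_ hu
  simp only [subcube, mem_filter_univ]
  exact fun x hx y hy => hD ℓ hℓ x y hx hy

lemma IsDT.one_third_lt_half_sum_abs_sub {n d : ℕ} (hn : 1 ≤ n) {T : Finset (Rst n)}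
    (hT : IsDT n d T) {S : Finset (Cube n)} (hS : #S = 2 ^ (n - 1))
    (hbal : ∀ ℓ ∈ T, IsBalancedOn S (subcube ℓ)) {D : Cube n → ℝ}
    (hD : ∀ ℓ ∈ T, ∀ x x' : Cube n, Consistent x ℓ → Consistent x' ℓ → D x = D x') :
    1 / 3 < 1 / 2 * ∑ x, |(if x ∈ S then (#S : ℝ)⁻¹ else 0) - D x| := by
  have hcardS : (#S : ℝ) = 2 ^ (n - 1) := by exact_mod_cast hS
  have hmass : (2 : ℝ) ^ n * (#S : ℝ)⁻¹ = 2 := by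
    rw [hcardS, ← Nat.sub_add_cancel hn, pow_succ, Nat.add_sub_cancel]
    field_simp
  have hfar := hT.two_pow_mul_lt_three_mul_sum_abs_sub hbal hD (u := (#S : ℝ)⁻¹)
    (by rw [hcardS]; positivity)
  linarith

lemma card_cube_eq_two_mul {n : ℕ} (hn : 1 ≤ n) : Fintype.card (Cube n) = 2 * 2 ^ (n - 1) := by
  rw [← pow_succ', Nat.sub_add_cancel hn]
  simp

lemma card_not_isBalancedOn_subcube_le {n d : ℕ} (hn : 1 ≤ n)
    (hcond : 18 * Real.log (200 * 3 ^ n) ≤ (2 : ℝ) ^ (n - d)) {ρ : Rst n} (hρ : rdepth ρ ≤ d) :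
    (#{S ∈ (univ : Finset (Cube n)).powersetCard (2 ^ (n - 1)) | ¬IsBalancedOn S (subcube ρ)} : ℝ)
      ≤ (Fintype.card (Cube n)).choose (2 ^ (n - 1)) / (100 * 3 ^ n) := by
  have hsize : (2 : ℝ) ^ (n - d) ≤ #(subcube ρ) := by
    rw [card_subcube]
    exact_mod_cast Nat.pow_le_pow_right two_pos (by omega)
  have hexp : Real.exp (-#(subcube ρ) / 18) ≤ (200 * 3 ^ n)⁻¹ := by
    rw [← Real.exp_log (by positivity : (0 : ℝ) < 200 * 3 ^ n), ← Real.exp_neg]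
    exact Real.exp_le_exp.mpr (by linarith)
  calc _ ≤ 2 * Real.exp (-#(subcube ρ) / 18) * (Fintype.card (Cube n)).choose (2 ^ (n - 1)) :=
        card_not_isBalancedOn_le _ (card_cube_eq_two_mul hn)
    _ ≤ 2 * (200 * 3 ^ n)⁻¹ * (Fintype.card (Cube n)).choose (2 ^ (n - 1)) := by gcongr
    _ = _ := by field_simp; ring

theorem random_half_subset_robustly_requires_large_depth_general
    (n d : ℕ) (hn : 1 ≤ n)
    (hcond : 18 * Real.log (200 * 3 ^ n) ≤ (2 : ℝ) ^ (n - d)) :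
    ((((Finset.univ : Finset (Cube n)).powersetCard (2 ^ (n - 1))).filter
        (fun S : Finset (Cube n) =>
          ∃ D' : Cube n → ℝ, (∀ x, 0 ≤ D' x) ∧ (∑ x : Cube n, D' x = 1) ∧
            ∃ d' ≤ d, ∃ T : Finset (Rst n), IsDT n d' T ∧
              (∀ ℓ ∈ T, ∀ x x' : Cube n, Consistent x ℓ → Consistent x' ℓ → D' x = D' x') ∧
              (1 / 2 : ℝ) * ∑ x : Cube n,
                  |(if x ∈ S then ((S.card : ℝ))⁻¹ else 0) - D' x| ≤ 1 / 3)).card : ℝ)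
      / (((Finset.univ : Finset (Cube n)).powersetCard (2 ^ (n - 1))).card : ℝ)
      ≤ 1 / 100 := by
  set 𝒮 := (univ : Finset (Cube n)).powersetCard (2 ^ (n - 1))
  set R := (univ : Finset (Rst n)).filter (rdepth · ≤ d)
  refine div_le_of_le_mul₀ (by positivity) (by norm_num) ?_
  calc _ ≤ (#(R.biUnion fun ρ => {S ∈ 𝒮 | ¬IsBalancedOn S (subcube ρ)}) : ℝ) := by
        refine Nat.mono_cast (card_le_card fun S hS => ?_)
        obtain ⟨hS𝒮, D', -, -, d', hd', T, hT, hD, htv⟩ := mem_filter.mp hS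
        by_contra hbal
        simp only [R, 𝒮, mem_biUnion, mem_filter, mem_univ, true_and, hS𝒮, not_exists,
          not_and, not_not] at hbal
        exact htv.not_gt <| hT.one_third_lt_half_sum_abs_sub hn (mem_powersetCard.mp hS𝒮).2
          (fun ℓ hℓ => hbal ℓ ((hT.rdepth_le ℓ hℓ).trans hd')) hD
    _ ≤ ∑ ρ ∈ R, (#{S ∈ 𝒮 | ¬IsBalancedOn S (subcube ρ)} : ℝ) := by exact_mod_cast card_biUnion_le
    _ ≤ #R * ((Fintype.card (Cube n)).choose (2 ^ (n - 1)) / (100 * 3 ^ n)) := by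
        rw [← nsmul_eq_mul]
        exact sum_le_card_nsmul _ _ _ fun ρ hρ =>
          card_not_isBalancedOn_subcube_le hn hcond (mem_filter.mp hρ).2
    _ ≤ 3 ^ n * ((Fintype.card (Cube n)).choose (2 ^ (n - 1)) / (100 * 3 ^ n)) := by
        gcongr
        exact_mod_cast (card_filter_le _ _).trans (by simp)
    _ = 1 / 100 * #𝒮 := by
        rw [card_powersetCard, card_univ]
        field_simp

/-- with probability ≥ 99/100 over a uniformly random half-subset `S` of the
cube, the uniform distribution on `S` is 1/3-far from every distribution whose mass
function is constant on the leaves of some decision tree of depth at most `d`,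
provided `2^{n−d} ≥ 18·ln(200·3^n)`. -/
theorem random_half_subset_robustly_requires_large_depth
    (n d : ℕ) (hn : 1 ≤ n) (hd : d ≤ n)
    (hcond : 18 * Real.log (200 * 3 ^ n) ≤ (2 : ℝ) ^ (n - d)) :
    ((((Finset.univ : Finset (Cube n)).powersetCard (2 ^ (n - 1))).filter
        (fun S : Finset (Cube n) =>
          ∃ D' : Cube n → ℝ, (∀ x, 0 ≤ D' x) ∧ (∑ x : Cube n, D' x = 1) ∧
            ∃ d' ≤ d, ∃ T : Finset (Rst n), IsDT n d' T ∧
              (∀ ℓ ∈ T, ∀ x x' : Cube n, Consistent x ℓ → Consistent x' ℓ → D' x = D' x') ∧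
              (1 / 2 : ℝ) * ∑ x : Cube n,
                  |(if x ∈ S then ((S.card : ℝ))⁻¹ else 0) - D' x| ≤ 1 / 3)).card : ℝ)
      / (((Finset.univ : Finset (Cube n)).powersetCard (2 ^ (n - 1))).card : ℝ)
      ≤ 1 / 100 :=
  random_half_subset_robustly_requires_large_depth_general n d hn hcond
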